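/- Let R be a commutative ring, P₀ a finitely generated projective R-module of rank 2, n ≥ 4, and P_n = P₀ ⊕ Re₃ ⊕ ⋯ ⊕ Re_n. Let a = (a₀, a₃, …, a_n) ∈ Um(P_n) and let I = ⟨a₄, …, a_n⟩ ⊆ R. Let b = (b₀, b₃) and b' = (b'₀, b'₃) be R-linear maps P₃ = P₀ ⊕ Re₃ → R whose induced maps b̄, b̄' : P₃/IP₃ → R/I are surjective and lie in the same E(P₃/IP₃)-orbit, i.e. b̄' = b̄ ∘ φ̄ for some φ̄ ∈ E(P₃/IP₃). Then (b₀, b₃, a₄, …, a_n) and (b'₀, b'₃, a₄, …, a_n) are surjective R-linear maps P_n → R lying in the same E(P_n)-orbit; in other words, the assignment (b̄₀, b̄₃) ↦ class of (b₀, b₃, a₄, …, a_n) induces a well-defined map Φ(a) : Um(P₃/IP₃)/E(P₃/IP₃) → Um(P_n)/E(P_n). -/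

import Mathlib

open Function

section Defs

variable (R : Type*) [CommRing R] (M : Type*) [AddCommGroup M] [Module R M] (m : ℕ)

/-- `Pn R M m` models `P_n = P₀ ⊕ Re₃ ⊕ ⋯ ⊕ Re_n` with `m = n - 2` free summands. -/
abbrev Pn := M × (Fin m → R)

/-- Projection onto `P₀`. -/
def proj0 : Pn R M m →ₗ[R] M := LinearMap.fst R M (Fin m → R)

/-- Projection `π_{k,n}` onto the `i`-th free summand. -/
def projF (i : Fin m) : Pn R M m →ₗ[R] R :=
  (LinearMap.proj i).comp (LinearMap.snd R M (Fin m → R))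

/-- Inclusion of `P₀`. -/
def incl0 : M →ₗ[R] Pn R M m := LinearMap.inl R M (Fin m → R)

/-- Inclusion of the `i`-th free summand. -/
def inclF (i : Fin m) : R →ₗ[R] Pn R M m :=
  (LinearMap.inr R M (Fin m → R)).comp (LinearMap.single R (fun _ => R) i)

/-- An endomorphism is elementary if it is `id + s` where `s` maps one direct
summand of `P₀ ⊕ Re₃ ⊕ ⋯ ⊕ Re_n` into a different one. -/
def IsElementary (φ : Module.End R (Pn R M m)) : Prop :=
  (∃ i : Fin m, ∃ t : M →ₗ[R] R, φ = LinearMap.id + (inclF R M m i) ∘ₗ t ∘ₗ (proj0 R M m)) ∨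
  (∃ i : Fin m, ∃ t : R →ₗ[R] M, φ = LinearMap.id + (incl0 R M m) ∘ₗ t ∘ₗ (projF R M m i)) ∨
  (∃ i j : Fin m, i ≠ j ∧ ∃ t : R →ₗ[R] R,
    φ = LinearMap.id + (inclF R M m i) ∘ₗ t ∘ₗ (projF R M m j))

/-- `E(P_n)`: the subgroup of `Aut(P_n)` generated by elementary automorphisms. -/
def Elem : Subgroup (Module.End R (Pn R M m))ˣ :=
  Subgroup.closure { φ : (Module.End R (Pn R M m))ˣ | IsElementary R M m ↑φ }

/-- The `i`-th free coordinate `a_i = a(e_i)` of a linear map `a : P_n → R`. -/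
def coord (a : Pn R M m →ₗ[R] R) (i : Fin m) : R := a (inclF R M m i 1)

/-- The map obtained from `a` by replacing its `i`-th free coordinate by `c`. -/
def replace (a : Pn R M m →ₗ[R] R) (i : Fin m) (c : R) : Pn R M m →ₗ[R] R :=
  a + (c - coord R M m a i) • projF R M m i

/-- A module has rank two if its localization at every prime has rank two. -/
def RankTwo : Prop :=
  ∀ (p : Ideal R) (_ : p.IsPrime),
    Module.finrank (Localization.AtPrime p) (LocalizedModule p.primeCompl M) = 2

/-- Given `b = (b₀, b₃) : P₃ → R` and `a : P_n → R`, the map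
`(b₀, b₃, a₄, …, a_n) : P_n → R`. -/
def combine (h : 0 < m) (b : M × R →ₗ[R] R) (a : Pn R M m →ₗ[R] R) :
    Pn R M m →ₗ[R] R :=
  b ∘ₗ (LinearMap.prod (proj0 R M m) (projF R M m ⟨0, h⟩)) +
    ∑ i ∈ Finset.univ.erase (⟨0, h⟩ : Fin m), coord R M m a i • projF R M m i

end Defs

/-!
Reduction mod `I` turns `f = (b₀, b₃, a₄, …, a_n)` into `b̄` composed with the projection
`P_n → P₃/IP₃`, and `I` lies in the image of `f` because `f(e_i) = a_i` for `i ≥ 4`; so `f` is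
surjective as soon as `b̄` is.

Each elementary generator of `E(P₃/IP₃)` lifts, by projectivity of `P₀`, to an elementary
automorphism of `P_n` fixing `e₄, …, e_n`; hence `φ̄` lifts to some `φ ∈ E(P_n)`. With
`f' = (b'₀, b'₃, a₄, …, a_n)`, the difference `c = f ∘ φ - f'` vanishes on `e₄, …, e_n` and has
values in `I`, so it is `(w, l)` on `P₀ ⊕ Re₃` with `w`, `l` valued in `I = ⟨a₄, …, a_n⟩`.
Precomposing `f'` with `x ↦ x + t(x₀) e_i` or `x ↦ x + r x₃ e_i` (`i ≥ 4`) adds `a_i t` or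
`a_i r x₃`; as `P₀` is finitely generated projective, `w` is an `I`-combination of functionals,
so such automorphisms give `ε ∈ E(P_n)` with `f' ∘ ε = f' - c`. They fix the `P₀`- and
`e₃`-components, so `c ∘ ε = c` and `f ∘ φ ∘ ε = f'`.
-/

def unitOneAdd {A : Type*} [Ring A] (s : A) (hs : s * s = 0) : Aˣ :=
  ⟨1 + s, 1 - s, by rw [mul_sub, mul_one, add_mul, one_mul, hs]; abel,
    by rw [sub_mul, one_mul, mul_add, mul_one, hs]; abel⟩

section Pn

variable {R : Type*} [CommRing R] {M : Type*} [AddCommGroup M] [Module R M] {m : ℕ}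

@[simp] lemma proj0_apply (x : Pn R M m) : proj0 R M m x = x.1 := rfl
@[simp] lemma projF_apply (i : Fin m) (x : Pn R M m) : projF R M m i x = x.2 i := rfl
@[simp] lemma incl0_apply (p : M) : incl0 R M m p = (p, 0) := rfl
@[simp] lemma inclF_apply (i : Fin m) (r : R) : inclF R M m i r = (0, Pi.single i r) := rfl

def elem0F (i : Fin m) (t : M →ₗ[R] R) : (Module.End R (Pn R M m))ˣ :=
  unitOneAdd (inclF R M m i ∘ₗ t ∘ₗ proj0 R M m) (by ext <;> simp)

def elemF0 (i : Fin m) (t : R →ₗ[R] M) : (Module.End R (Pn R M m))ˣ :=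
  unitOneAdd (incl0 R M m ∘ₗ t ∘ₗ projF R M m i) (by ext <;> simp)

def elemFF (M : Type*) [AddCommGroup M] [Module R M] {i j : Fin m} (hij : i ≠ j)
    (t : R →ₗ[R] R) : (Module.End R (Pn R M m))ˣ :=
  unitOneAdd (inclF R M m i ∘ₗ t ∘ₗ projF R M m j)
    (by ext <;> simp [Pi.single_eq_of_ne hij.symm])

lemma elem0F_apply (i : Fin m) (t : M →ₗ[R] R) (x : Pn R M m) :
    (elem0F i t : Module.End R (Pn R M m)) x = x + inclF R M m i (t x.1) := rfl

lemma elemF0_apply (i : Fin m) (t : R →ₗ[R] M) (x : Pn R M m) :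
    (elemF0 i t : Module.End R (Pn R M m)) x = x + incl0 R M m (t (x.2 i)) := rfl

lemma elemFF_apply {i j : Fin m} (hij : i ≠ j) (t : R →ₗ[R] R) (x : Pn R M m) :
    (elemFF M hij t : Module.End R (Pn R M m)) x = x + inclF R M m i (t (x.2 j)) := rfl

lemma elem0F_mem (i : Fin m) (t : M →ₗ[R] R) : elem0F i t ∈ Elem R M m :=
  Subgroup.subset_closure (Or.inl ⟨i, t, rfl⟩)

lemma elemF0_mem (i : Fin m) (t : R →ₗ[R] M) : elemF0 i t ∈ Elem R M m :=
  Subgroup.subset_closure (Or.inr (Or.inl ⟨i, t, rfl⟩))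

lemma elemFF_mem {i j : Fin m} (hij : i ≠ j) (t : R →ₗ[R] R) :
    elemFF M hij t ∈ Elem R M m :=
  Subgroup.subset_closure (Or.inr (Or.inr ⟨i, j, hij, t, rfl⟩))

lemma eq_comp_proj0_add_smul_projF (c : Pn R M m →ₗ[R] R) (k : Fin m)
    (hc : ∀ i ≠ k, c ∘ₗ inclF R M m i = 0) :
    c = (c ∘ₗ incl0 R M m) ∘ₗ proj0 R M m + c (inclF R M m k 1) • projF R M m k := by
  refine LinearMap.prod_ext ?_ (LinearMap.pi_ext' fun i => ?_)
  · ext p; simp [incl0]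
  · by_cases hik : i = k
    · subst hik; ext; simp [inclF, Prod.mk_zero_zero]
    · have h1 := LinearMap.congr_fun (hc i hik) 1
      simp only [LinearMap.comp_apply, LinearMap.zero_apply, inclF_apply] at h1
      ext; simp [h1, Pi.single_eq_of_ne (Ne.symm hik), Prod.mk_zero_zero]

end Pn

section Corrections

variable {R : Type*} [CommRing R] {M : Type*} [AddCommGroup M] [Module R M] {m : ℕ}

lemma map_inclF (a : Pn R M m →ₗ[R] R) (i : Fin m) (r : R) :
    a (inclF R M m i r) = r * coord R M m a i := by
  rw [coord, ← smul_eq_mul, ← map_smul, ← map_smul, smul_eq_mul, mul_one]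

def coordIdeal (a : Pn R M m →ₗ[R] R) (k : Fin m) : Ideal R :=
  Ideal.span {x : R | ∃ i : Fin m, i ≠ k ∧ x = coord R M m a i}

def elemCorrections (f : Pn R M m →ₗ[R] R) (k : Fin m) :
    AddSubmonoid ((M →ₗ[R] R) × R) where
  carrier := {wl | ∃ ε ∈ Elem R M m,
    proj0 R M m ∘ₗ ↑ε = proj0 R M m ∧ projF R M m k ∘ₗ ↑ε = projF R M m k ∧
      f ∘ₗ ↑ε = f + wl.1 ∘ₗ proj0 R M m + wl.2 • projF R M m k}
  zero_mem' := ⟨1, one_mem _, rfl, rfl, by simp [Module.End.one_eq_id]⟩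
  add_mem' := by
    rintro ⟨w₁, l₁⟩ ⟨w₂, l₂⟩ ⟨ε₁, hε₁, h₁0, h₁k, h₁f⟩ ⟨ε₂, hε₂, h₂0, h₂k, h₂f⟩
    refine ⟨ε₁ * ε₂, mul_mem hε₁ hε₂, ?_, ?_, ?_⟩
    · rw [Units.val_mul, Module.End.mul_eq_comp, ← LinearMap.comp_assoc, h₁0, h₂0]
    · rw [Units.val_mul, Module.End.mul_eq_comp, ← LinearMap.comp_assoc, h₁k, h₂k]
    · rw [Units.val_mul, Module.End.mul_eq_comp, ← LinearMap.comp_assoc, h₁f,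
        LinearMap.add_comp, LinearMap.add_comp, LinearMap.comp_assoc, h₂0,
        LinearMap.smul_comp, h₂k, h₂f]
      ext x <;> simp only [LinearMap.add_apply, LinearMap.comp_apply, LinearMap.smul_apply,
        Prod.fst_add, Prod.snd_add, LinearMap.add_apply] <;> ring

lemma coord_smul_mem_elemCorrections (f : Pn R M m →ₗ[R] R) {i k : Fin m} (hik : i ≠ k)
    (t : M →ₗ[R] R) (l : R) :
    (coord R M m f i • t, coord R M m f i * l) ∈ elemCorrections f k := by
  have hP₀ : (coord R M m f i • t, 0) ∈ elemCorrections f k := by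
    refine ⟨elem0F i t, elem0F_mem i t, ?_, ?_, ?_⟩ <;> refine LinearMap.ext fun x => ?_
    · simp [elem0F_apply]
    · simp [elem0F_apply, Pi.single_eq_of_ne hik.symm]
    · simp only [LinearMap.comp_apply, elem0F_apply, map_add, map_inclF]
      simp [mul_comm]
  have he_k : (0, coord R M m f i * l) ∈ elemCorrections f k := by
    refine ⟨elemFF M hik (l • LinearMap.id), elemFF_mem hik _, ?_, ?_, ?_⟩ <;>
      refine LinearMap.ext fun x => ?_
    · simp [elemFF_apply]
    · simp [elemFF_apply, Pi.single_eq_of_ne hik.symm]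
    · simp only [LinearMap.comp_apply, elemFF_apply, map_add, map_inclF]
      simp only [LinearMap.smul_apply, LinearMap.id_coe, id_eq, smul_eq_mul, LinearMap.zero_comp,
        add_zero, LinearMap.add_apply, projF_apply, add_right_inj]
      ring
  simpa using add_mem hP₀ he_k

lemma smul_mem_elemCorrections {f : Pn R M m →ₗ[R] R} {k : Fin m} {x : R}
    (hx : x ∈ coordIdeal f k) (t : M →ₗ[R] R) (l : R) :
    (x • t, x * l) ∈ elemCorrections f k := by
  induction hx using Submodule.span_induction generalizing t l with
  | mem y hy =>
    obtain ⟨i, hik, rfl⟩ := hy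
    exact coord_smul_mem_elemCorrections f hik t l
  | zero =>
    simp only [zero_smul, zero_mul]
    exact zero_mem _
  | add y z _ _ hy hz => simpa [add_smul, add_mul] using add_mem (hy t l) (hz t l)
  | smul r y _ hy => simpa [smul_smul, mul_left_comm, mul_comm] using hy (r • t) (r * l)

lemma mem_elemCorrections [Module.Finite R M] [Module.Projective R M]
    {f : Pn R M m →ₗ[R] R} {k : Fin m} {w : M →ₗ[R] R} {l : R}
    (hw : ∀ p, w p ∈ coordIdeal f k) (hl : l ∈ coordIdeal f k) :
    (w, l) ∈ elemCorrections f k := by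
  obtain ⟨N, π, σ, -, -, hπσ⟩ := Module.Finite.exists_comp_eq_id_of_projective R M
  -- `M` is a retract of `Fin N → R`, so `w` is a combination of the functionals `proj j ∘ σ`
  -- with coefficients `w (π eⱼ)` in the ideal.
  have hw_sum : w = ∑ j, w (π (Pi.single j 1)) • (LinearMap.proj j ∘ₗ σ) := by
    refine LinearMap.ext fun p => ?_
    conv_lhs => rw [← LinearMap.id_apply (R := R) p, ← hπσ, LinearMap.comp_apply,
      ← LinearMap.comp_apply w π, LinearMap.pi_apply_eq_sum_univ]
    simp only [LinearMap.sum_apply, LinearMap.smul_apply, LinearMap.comp_apply,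
      LinearMap.proj_apply, smul_eq_mul]
    refine Finset.sum_congr rfl fun j _ => ?_
    simp only [← Pi.single_apply, Pi.single_comm]
    exact mul_comm _ _
  have hw_mem : (w, 0) ∈ elemCorrections f k := by
    change w ∈ (elemCorrections f k).comap (AddMonoidHom.inl _ _)
    rw [hw_sum]
    exact sum_mem fun j _ => by
      simpa using smul_mem_elemCorrections (hw _) (LinearMap.proj j ∘ₗ σ) 0
  have hl_mem : (0, l) ∈ elemCorrections f k := by
    simpa using smul_mem_elemCorrections hl 0 1
  simpa using add_mem hw_mem hl_mem

theorem exists_elem_add_comp_eq [Module.Finite R M] [Module.Projective R M]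
    (f c : Pn R M m →ₗ[R] R) (k : Fin m) (hc : ∀ i ≠ k, c ∘ₗ inclF R M m i = 0)
    (hcI : ∀ x, c x ∈ coordIdeal f k) :
    ∃ ε ∈ Elem R M m, (f + c) ∘ₗ ↑ε = f := by
  have hc_eq := eq_comp_proj0_add_smul_projF c k hc
  set w := c ∘ₗ incl0 R M m
  set l := c (inclF R M m k 1)
  obtain ⟨ε, hε, h0, hk, hf⟩ :=
    mem_elemCorrections (f := f) (k := k) (w := -w) (l := -l)
      (fun _ => neg_mem (hcI _)) (neg_mem (hcI _))
  refine ⟨ε, hε, ?_⟩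
  rw [LinearMap.add_comp, hf, hc_eq, LinearMap.add_comp, LinearMap.comp_assoc, h0,
    LinearMap.smul_comp, hk]
  simp only [LinearMap.neg_comp]
  module

end Corrections

abbrev P3Mod {R : Type*} [CommRing R] (I : Ideal R) (M : Type*) [AddCommGroup M] [Module R M] :
    Type _ :=
  Pn (R ⧸ I) (M ⧸ (I • ⊤ : Submodule R M)) 1

section Reduction

variable {R : Type*} [CommRing R] {M : Type*} [AddCommGroup M] [Module R M] {m : ℕ}
  (I : Ideal R) (k : Fin m)

def IsReduction (b : M × R →ₗ[R] R) (bbar : P3Mod I M →ₗ[R ⧸ I] R ⧸ I) : Prop :=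
  ∀ (p : M) (r : R), bbar ((Submodule.Quotient.mk p : M ⧸ (I • ⊤ : Submodule R M)),
    fun _ => Ideal.Quotient.mk I r) = Ideal.Quotient.mk I (b (p, r))

/-- `P_n → P₃/IP₃`, forgetting the coordinates at `e_i` for `i ≠ k`. -/
def reduceMod : Pn R M m →ₗ[R] P3Mod I M :=
  LinearMap.prod ((I • ⊤ : Submodule R M).mkQ ∘ₗ proj0 R M m)
    (LinearMap.pi fun _ => (Ideal.Quotient.mkₐ R I).toLinearMap ∘ₗ projF R M m k)

@[simp] lemma reduceMod_apply (x : Pn R M m) :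
    reduceMod I k x = (Submodule.Quotient.mk x.1, fun _ => Ideal.Quotient.mk I (x.2 k)) := rfl

lemma reduceMod_surjective : Surjective (reduceMod (M := M) I k) := by
  rintro ⟨u, v⟩
  obtain ⟨p, rfl⟩ := Submodule.Quotient.mk_surjective _ u
  obtain ⟨r, hr⟩ := Ideal.Quotient.mk_surjective (v 0)
  refine ⟨(p, Pi.single k r), Prod.ext rfl (funext fun j => ?_)⟩
  rw [Subsingleton.elim j 0]
  simp [hr]

def liftableMod : Subgroup (Module.End (R ⧸ I) (P3Mod I M))ˣ where
  carrier := {u | ∃ φ ∈ Elem R M m,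
    (∀ x, reduceMod I k ((φ : Module.End R (Pn R M m)) x) =
      (u : Module.End (R ⧸ I) (P3Mod I M)) (reduceMod I k x)) ∧
    ∀ i ≠ k, ∀ r, (φ : Module.End R (Pn R M m)) (inclF R M m i r) = inclF R M m i r}
  one_mem' := ⟨1, one_mem _, fun _ => rfl, fun _ _ _ => rfl⟩
  mul_mem' := by
    rintro u v ⟨φ, hφ, hφu, hφk⟩ ⟨ψ, hψ, hψv, hψk⟩
    refine ⟨φ * ψ, mul_mem hφ hψ, fun x => ?_, fun i hi r => ?_⟩
    · simp only [Units.val_mul, Module.End.mul_apply, hφu, hψv]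
    · simp only [Units.val_mul, Module.End.mul_apply, hφk i hi, hψk i hi]
  inv_mem' := by
    rintro u ⟨φ, hφ, hφu, hφk⟩
    refine ⟨φ⁻¹, inv_mem hφ, fun x => ?_, fun i hi r => ?_⟩
    · have := hφu ((↑φ⁻¹ : Module.End R (Pn R M m)) x)
      rw [← Module.End.mul_apply, ← Units.val_mul, mul_inv_cancel, Units.val_one,
        Module.End.one_apply] at this
      rw [this, ← Module.End.mul_apply, ← Units.val_mul, inv_mul_cancel, Units.val_one,
        Module.End.one_apply]
    · conv_lhs => rw [← hφk i hi r]
      rw [← Module.End.mul_apply, ← Units.val_mul, inv_mul_cancel, Units.val_one,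
        Module.End.one_apply]

lemma elem0F_mem_liftableMod [Module.Projective R M]
    (t : M ⧸ (I • ⊤ : Submodule R M) →ₗ[R ⧸ I] R ⧸ I) :
    elem0F 0 t ∈ liftableMod I k := by
  obtain ⟨tl, htl⟩ := Module.projective_lifting_property (Ideal.Quotient.mkₐ R I).toLinearMap
    ((t.restrictScalars R) ∘ₗ (I • ⊤ : Submodule R M).mkQ) Ideal.Quotient.mk_surjective
  refine ⟨elem0F k tl, elem0F_mem k tl, fun x => ?_, fun i hi r => ?_⟩
  · have := LinearMap.congr_fun htl x.1
    simp only [LinearMap.comp_apply, AlgHom.toLinearMap_apply, Ideal.Quotient.mkₐ_eq_mk] at this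
    ext j
    · simp [elem0F_apply]
    · rw [Subsingleton.elim j 0]
      simp [elem0F_apply, this]
  · simp [elem0F_apply]

lemma elemF0_mem_liftableMod (t : R ⧸ I →ₗ[R ⧸ I] M ⧸ (I • ⊤ : Submodule R M)) :
    elemF0 0 t ∈ liftableMod I k := by
  obtain ⟨p, hp⟩ := Submodule.Quotient.mk_surjective _ (t 1)
  refine ⟨elemF0 k (LinearMap.toSpanSingleton R M p), elemF0_mem k _, fun x => ?_,
    fun i hi r => ?_⟩
  · have key : (x.2 k • Submodule.Quotient.mk p : M ⧸ (I • ⊤ : Submodule R M)) =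
        t (Ideal.Quotient.mk I (x.2 k)) := by
      rw [hp, ← mul_one (Ideal.Quotient.mk I (x.2 k)), ← smul_eq_mul, map_smul]
      rfl
    ext j
    · simp [elemF0_apply, key]
    · simp [elemF0_apply]
  · simp [elemF0_apply, Pi.single_eq_of_ne hi.symm]

theorem elem_le_liftableMod [Module.Projective R M] :
    Elem (R ⧸ I) (M ⧸ (I • ⊤ : Submodule R M)) 1 ≤ liftableMod I k := by
  refine Subgroup.closure_le _ |>.2 ?_
  rintro v (⟨i, t, hv⟩ | ⟨i, t, hv⟩ | ⟨i, j, hij, -⟩)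
  · rw [Subsingleton.elim i 0] at hv
    rw [show v = elem0F 0 t from Units.ext hv]
    exact elem0F_mem_liftableMod I k t
  · rw [Subsingleton.elim i 0] at hv
    rw [show v = elemF0 0 t from Units.ext hv]
    exact elemF0_mem_liftableMod I k t
  · exact absurd (Subsingleton.elim i j) hij

end Reduction

section Combine

variable {R : Type*} [CommRing R] {M : Type*} [AddCommGroup M] [Module R M] {m : ℕ}
  (h : 0 < m) (b : M × R →ₗ[R] R) (a : Pn R M m →ₗ[R] R)

lemma combine_apply (x : Pn R M m) :
    combine R M m h b a x = b (x.1, x.2 ⟨0, h⟩) +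
      ∑ i ∈ Finset.univ.erase (⟨0, h⟩ : Fin m), coord R M m a i * x.2 i := by
  simp [combine, LinearMap.sum_apply, smul_eq_mul]

lemma coord_combine {i : Fin m} (hi : i ≠ ⟨0, h⟩) :
    coord R M m (combine R M m h b a) i = coord R M m a i := by
  rw [coord, combine_apply,
    Finset.sum_eq_single_of_mem i (Finset.mem_erase.2 ⟨hi, Finset.mem_univ i⟩)]
  · simp [Pi.single_eq_of_ne hi.symm, Prod.mk_zero_zero]
  · intro j _ hji
    simp [Pi.single_eq_of_ne hji]

lemma coordIdeal_combine :
    coordIdeal (combine R M m h b a) ⟨0, h⟩ = coordIdeal a ⟨0, h⟩ := by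
  unfold coordIdeal
  congr 1
  ext x
  constructor <;> rintro ⟨i, hi, rfl⟩ <;> exact ⟨i, hi, by rw [coord_combine h b a hi]⟩

variable {I : Ideal R} {bbar : P3Mod I M →ₗ[R ⧸ I] R ⧸ I}

lemma mk_combine (hI : coordIdeal a ⟨0, h⟩ ≤ I)
    (hb : IsReduction I b bbar) (x : Pn R M m) :
    Ideal.Quotient.mk I (combine R M m h b a x) = bbar (reduceMod I ⟨0, h⟩ x) := by
  rw [combine_apply, map_add, map_sum, Finset.sum_eq_zero, add_zero, reduceMod_apply, hb]
  intro i hi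
  have hai : coord R M m a i ∈ I := hI (Ideal.subset_span ⟨i, (Finset.mem_erase.1 hi).1, rfl⟩)
  rw [map_mul, Ideal.Quotient.eq_zero_iff_mem.2 hai, zero_mul]

theorem combine_surjective (hI : I = coordIdeal a ⟨0, h⟩)
    (hb : IsReduction I b bbar)
    (hbsurj : Surjective bbar) : Surjective (combine R M m h b a) := by
  intro y
  obtain ⟨z, hz⟩ := hbsurj (Ideal.Quotient.mk I y)
  obtain ⟨x, rfl⟩ := reduceMod_surjective I ⟨0, h⟩ z
  have hyx : y - combine R M m h b a x ∈ I := by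
    rw [← Ideal.Quotient.eq_zero_iff_mem, map_sub, mk_combine h b a hI.ge hb, hz, sub_self]
  have hI_range : I ≤ LinearMap.range (combine R M m h b a) := by
    rw [hI, coordIdeal, Ideal.span_le]
    rintro _ ⟨i, hi, rfl⟩
    exact ⟨inclF R M m i 1, by rw [map_inclF, one_mul, coord_combine h b a hi]⟩
  obtain ⟨x', hx'⟩ := hI_range hyx
  exact ⟨x' + x, by rw [map_add, hx', sub_add_cancel]⟩

theorem exists_elem_combine_comp_eq [Module.Finite R M] [Module.Projective R M]
    (b' : M × R →ₗ[R] R) (hI : I = coordIdeal a ⟨0, h⟩)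
    {u : (Module.End (R ⧸ I) (P3Mod I M))ˣ}
    (hu : u ∈ Elem (R ⧸ I) (M ⧸ (I • ⊤ : Submodule R M)) 1)
    (hb : IsReduction I b bbar)
    (hb' : IsReduction I b' (bbar ∘ₗ (u : Module.End (R ⧸ I) (P3Mod I M)))) :
    ∃ φ ∈ Elem R M m, combine R M m h b a ∘ₗ ↑φ = combine R M m h b' a := by
  obtain ⟨φ, hφ, hφu, hφ_fix⟩ := elem_le_liftableMod I ⟨0, h⟩ hu
  set c := combine R M m h b a ∘ₗ ↑φ - combine R M m h b' a
  have hc : ∀ i ≠ ⟨0, h⟩, c ∘ₗ inclF R M m i = 0 := fun i hi =>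
    LinearMap.ext fun r => by
      simp only [c, LinearMap.sub_apply, LinearMap.comp_apply, LinearMap.zero_apply,
        hφ_fix i hi, map_inclF, coord_combine h _ a hi, sub_self]
  have hcI : ∀ x, c x ∈ coordIdeal (combine R M m h b' a) ⟨0, h⟩ := fun x => by
    rw [coordIdeal_combine, ← hI, ← Ideal.Quotient.eq_zero_iff_mem]
    simp [c, mk_combine h _ a hI.ge hb, mk_combine h _ a hI.ge hb', hφu]
  obtain ⟨ε, hε, hcε⟩ := exists_elem_add_comp_eq _ c ⟨0, h⟩ hc hcI
  refine ⟨φ * ε, mul_mem hφ hε, ?_⟩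
  rwa [add_sub_cancel, LinearMap.comp_assoc] at hcε

end Combine

/-- Let `R` be a commutative ring, `P₀` a finitely generated projective
`R`-module of rank `2`, `n ≥ 4` and `P_n = P₀ ⊕ Re₃ ⊕ ⋯ ⊕ Re_n`. Let
`a = (a₀, a₃, …, a_n) : P_n → R` be surjective and `I = ⟨a₄, …, a_n⟩`. Let
`b = (b₀, b₃), b' = (b'₀, b'₃) : P₃ → R` induce surjective maps
`b̄, b̄' : P₃/IP₃ = (P₀/IP₀) ⊕ (R/I) → R/I` lying in the same `E(P₃/IP₃)`-orbit. Then
`(b₀, b₃, a₄, …, a_n)` and `(b'₀, b'₃, a₄, …, a_n)` are surjective and lie in the same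
`E(P_n)`-orbit; in other words `Φ(a) : Um(P₃/IP₃)/E(P₃/IP₃) → Um(P_n)/E(P_n)` is
well defined. -/
theorem statement9 (R : Type*) [CommRing R] (P₀ : Type*) [AddCommGroup P₀] [Module R P₀]
    [Module.Finite R P₀] [Module.Projective R P₀]
    (n : ℕ) (hn : 4 ≤ n) (a : Pn R P₀ (n - 2) →ₗ[R] R)
    (I : Ideal R)
    (hI : I = Ideal.span {x : R | ∃ i : Fin (n - 2), i ≠ ⟨0, by omega⟩ ∧
      x = coord R P₀ (n - 2) a i})
    (b b' : P₀ × R →ₗ[R] R)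
    (bbar b'bar : Pn (R ⧸ I) (P₀ ⧸ (I • ⊤ : Submodule R P₀)) 1 →ₗ[R ⧸ I] R ⧸ I)
    (hb : ∀ (p : P₀) (r : R),
      bbar ((Submodule.Quotient.mk p : P₀ ⧸ (I • ⊤ : Submodule R P₀)),
        fun _ => Ideal.Quotient.mk I r) = Ideal.Quotient.mk I (b (p, r)))
    (hb' : ∀ (p : P₀) (r : R),
      b'bar ((Submodule.Quotient.mk p : P₀ ⧸ (I • ⊤ : Submodule R P₀)),
        fun _ => Ideal.Quotient.mk I r) = Ideal.Quotient.mk I (b' (p, r)))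
    (hbsurj : Function.Surjective bbar) (hb'surj : Function.Surjective b'bar)
    (horbit : ∃ φbar ∈ Elem (R ⧸ I) (P₀ ⧸ (I • ⊤ : Submodule R P₀)) 1,
      b'bar = bbar ∘ₗ
        (φbar : Module.End (R ⧸ I) (Pn (R ⧸ I) (P₀ ⧸ (I • ⊤ : Submodule R P₀)) 1))) :
    Function.Surjective (combine R P₀ (n - 2) (by omega) b a) ∧
    Function.Surjective (combine R P₀ (n - 2) (by omega) b' a) ∧
      ∃ φ ∈ Elem R P₀ (n - 2),
        (combine R P₀ (n - 2) (by omega) b a) ∘ₗ (φ : Module.End R (Pn R P₀ (n - 2))) =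
          combine R P₀ (n - 2) (by omega) b' a := by
  have hm : 0 < n - 2 := by omega
  obtain ⟨u, hu, rfl⟩ := horbit
  exact ⟨combine_surjective hm b a hI hb hbsurj, combine_surjective hm b' a hI hb' hb'surj,
    exists_elem_combine_comp_eq hm b a b' hI hu hb hb'⟩
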